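/- arXiv:2304.07798 — 3 statements merged into one kernel-verified Lean document; each statement's English description precedes it below -/
import Mathlib

section
/- Assume G is an elementary abelian 2-group (of order n ≥ 4) and {g,h,i} = {1,2,3}. Then the matrix E_4*A_gE_h*A_iE_4* does not lie in T₀, where T₀ is the F-linear span of {E_a*A_bE_c* : a,b,c ∈ {0,1,2,3,4}}. -/
set_option linter.unusedSectionVars false


open Matrix

abbrev XG (G : Type) [Group G] : Type := {v : Fin 3 → G // v 0 * v 1 = v 2}

def cIdx : Fin 5 → Fin 3
  | 0 => 0
  | 1 => 0
  | 2 => 1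
  | 3 => 2
  | 4 => 0

def rel {G : Type} [Group G] (i : Fin 5) (y z : XG G) : Prop :=
  if i = 0 then y = z
  else if i = 4 then ∀ d : Fin 3, y.1 d ≠ z.1 d
  else y ≠ z ∧ y.1 (cIdx i) = z.1 (cIdx i)

instance {G : Type} [Group G] [DecidableEq G] (i : Fin 5) (y z : XG G) :
    Decidable (rel i y z) := by
  unfold rel
  infer_instance

def Adj (F : Type) [Field F] {G : Type} [Group G] [DecidableEq G] (i : Fin 5) :
    Matrix (XG G) (XG G) F :=
  Matrix.of fun y z => if rel i y z then 1 else 0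

def DualE (F : Type) [Field F] {G : Type} [Group G] [DecidableEq G] (x : XG G) (i : Fin 5) :
    Matrix (XG G) (XG G) F :=
  Matrix.of fun y z => if y = z ∧ rel i x y then 1 else 0

def AllOne (F : Type) [Field F] (G : Type) [Group G] : Matrix (XG G) (XG G) F :=
  Matrix.of fun _ _ => 1

def genSet (F : Type) [Field F] (G : Type) [Group G] [Fintype G] [DecidableEq G]
    (x : XG G) : Set (Matrix (XG G) (XG G) F) :=
  {M | ∃ a b c : Fin 5, M = DualE F x a * Adj F b * DualE F x c}

def TerwilligerAlg (F : Type) [Field F] (G : Type) [Group G] [Fintype G] [DecidableEq G]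
    (x : XG G) : Subalgebra F (Matrix (XG G) (XG G) F) :=
  Algebra.adjoin F (genSet F G x)

section Aux

variable {F : Type} [Field F] {G : Type} [Group G] [Fintype G] [DecidableEq G]

lemma dmul (x : XG G) (a : Fin 5) (N : Matrix (XG G) (XG G) F) (y z : XG G) :
    (DualE F x a * N) y z = if rel a x y then N y z else 0 := by
  rw [Matrix.mul_apply, Finset.sum_eq_single y]
  · by_cases hr : rel a x y <;> simp [DualE, hr]
  · intro b _ hb
    simp [DualE, (Ne.symm hb : ¬ y = b)]
  · intro hy; exact absurd (Finset.mem_univ y) hy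

lemma muld (x : XG G) (c : Fin 5) (N : Matrix (XG G) (XG G) F) (y z : XG G) :
    (N * DualE F x c) y z = if rel c x z then N y z else 0 := by
  rw [Matrix.mul_apply, Finset.sum_eq_single z]
  · by_cases hr : rel c x z <;> simp [DualE, hr]
  · intro b _ hb
    simp [DualE, hb]
  · intro hy; exact absurd (Finset.mem_univ z) hy

lemma genEntry (x : XG G) (a b c : Fin 5) (y z : XG G) :
    ((DualE F x a * Adj F b * DualE F x c : Matrix (XG G) (XG G) F)) y z
      = if rel a x y ∧ rel b y z ∧ rel c x z then (1:F) else 0 := by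
  rw [muld, dmul]
  by_cases h1 : rel a x y <;> by_cases h2 : rel b y z <;> by_cases h3 : rel c x z <;>
    simp [Adj, h1, h2, h3]

lemma span_eq (x y z z' : XG G)
    (hz : ∀ a, rel a x z ↔ rel a x z') (hb : ∀ b, rel b y z ↔ rel b y z')
    (M : Matrix (XG G) (XG G) F) (hM : M ∈ Submodule.span F (genSet F G x)) :
    M y z = M y z' := by
  induction hM using Submodule.span_induction with
  | mem M hMg =>
      obtain ⟨a, b, c, rfl⟩ := hMg
      rw [genEntry, genEntry]
      exact if_congr (and_congr_right fun _ => and_congr (hb b) (hz c)) rfl rfl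
  | zero => simp
  | add M N _ _ h1 h2 => simp [Matrix.add_apply, h1, h2]
  | smul r M _ h1 => simp [Matrix.smul_apply, h1]

lemma target_entry (x : XG G) (g h i : Fin 5) (y z : XG G)
    (hy : rel 4 x y) (hz : rel 4 x z) :
    ((DualE F x 4 * Adj F g * DualE F x h * Adj F i * DualE F x 4 : Matrix (XG G) (XG G) F)) y z
      = ∑ w : XG G, (if rel g y w ∧ rel h x w ∧ rel i w z then (1:F) else 0) := by
  rw [muld, if_pos hz, Matrix.mul_apply]
  apply Finset.sum_congr rfl
  intro w _
  simp only [muld, dmul, hy, if_true]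
  by_cases h1 : rel g y w <;> by_cases h2 : rel h x w <;> by_cases h3 : rel i w z <;>
    simp [Adj, h1, h2, h3]

lemma rel4_iff {u v : XG G} : rel 4 u v ↔ ∀ d, u.1 d ≠ v.1 d := by
  simp [rel]

lemma rel_mid {j : Fin 5} (h0 : j ≠ 0) (h4 : j ≠ 4) {u v : XG G} :
    rel j u v ↔ (u ≠ v ∧ u.1 (cIdx j) = v.1 (cIdx j)) := by
  simp [rel, h0, h4]

lemma reltype (u v v' : XG G) (h1 : ∀ d, u.1 d ≠ v.1 d) (h2 : ∀ d, u.1 d ≠ v'.1 d)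
    (a : Fin 5) : rel a u v ↔ rel a u v' := by
  unfold rel
  split_ifs with e0 e4
  · have nv : u ≠ v := fun h => h1 0 (by rw [h])
    have nv' : u ≠ v' := fun h => h2 0 (by rw [h])
    simp [nv, nv']
  · exact iff_of_true h1 h2
  · simp [h1 (cIdx a), h2 (cIdx a)]

end Aux

section Key

variable {F : Type} [Field F] {G : Type} [Group G] [Fintype G] [DecidableEq G]

lemma det2 (hsq : ∀ u : G, u * u = 1) (u v : XG G) (d e : Fin 3) (hde : d ≠ e)
    (h1 : u.1 d = v.1 d) (h2 : u.1 e = v.1 e) : u = v := by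
  have e2 : ∀ w : XG G, w.1 2 = w.1 0 * w.1 1 := fun w => w.2.symm
  have e1 : ∀ w : XG G, w.1 1 = w.1 0 * w.1 2 := by
    intro w; rw [← w.2, ← mul_assoc, hsq, one_mul]
  have e0 : ∀ w : XG G, w.1 0 = w.1 2 * w.1 1 := by
    intro w; rw [← w.2, mul_assoc, hsq, mul_one]
  have l01 : u.1 0 = v.1 0 → u.1 1 = v.1 1 → u = v := by
    intro p q; apply Subtype.ext; funext f; fin_cases f
    · exact p
    · exact q
    · show u.1 2 = v.1 2; rw [e2 u, e2 v, p, q]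
  have l02 : u.1 0 = v.1 0 → u.1 2 = v.1 2 → u = v := by
    intro p q; apply Subtype.ext; funext f; fin_cases f
    · exact p
    · show u.1 1 = v.1 1; rw [e1 u, e1 v, p, q]
    · exact q
  have l12 : u.1 1 = v.1 1 → u.1 2 = v.1 2 → u = v := by
    intro p q; apply Subtype.ext; funext f; fin_cases f
    · show u.1 0 = v.1 0; rw [e0 u, e0 v, p, q]
    · exact p
    · exact q
  fin_cases d <;> fin_cases e <;>
    first
      | exact absurd rfl hde
      | exact l01 h1 h2
      | exact l01 h2 h1
      | exact l02 h1 h2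
      | exact l02 h2 h1
      | exact l12 h1 h2
      | exact l12 h2 h1

lemma key (x y z z' w0 : XG G) (hsq : ∀ u : G, u * u = 1) (g h i : Fin 5)
    (hg0 : g ≠ 0) (hg4 : g ≠ 4) (hh0 : h ≠ 0) (hh4 : h ≠ 4) (hi0 : i ≠ 0) (hi4 : i ≠ 4)
    (hgh : cIdx g ≠ cIdx h)
    (H1 : ∀ d, x.1 d ≠ y.1 d) (H2 : ∀ d, x.1 d ≠ z.1 d) (H3 : ∀ d, x.1 d ≠ z'.1 d)
    (H4 : ∀ d, y.1 d ≠ z.1 d) (H5 : ∀ d, y.1 d ≠ z'.1 d)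
    (W1 : w0.1 (cIdx g) = y.1 (cIdx g)) (W2 : w0.1 (cIdx h) = x.1 (cIdx h))
    (W3 : w0.1 (cIdx i) = z.1 (cIdx i)) (W4 : w0.1 (cIdx i) ≠ z'.1 (cIdx i)) :
    DualE F x 4 * Adj F g * DualE F x h * Adj F i * DualE F x 4 ∉
      Submodule.span F (genSet F G x) := by
  intro hmem
  have hy4 : rel 4 x y := rel4_iff.mpr H1
  have hz4 : rel 4 x z := rel4_iff.mpr H2
  have hz'4 : rel 4 x z' := rel4_iff.mpr H3
  -- the unique middle point forces w = w0
  have huniq : ∀ w : XG G, rel g y w → rel h x w → w = w0 := by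
    intro w hgw hhw
    have c1 : w.1 (cIdx g) = w0.1 (cIdx g) := by
      rw [W1, ← ((rel_mid hg0 hg4).mp hgw).2]
    have c2 : w.1 (cIdx h) = w0.1 (cIdx h) := by
      rw [W2, ← ((rel_mid hh0 hh4).mp hhw).2]
    exact det2 hsq w w0 (cIdx g) (cIdx h) hgh c1 c2
  have hval : (DualE F x 4 * Adj F g * DualE F x h * Adj F i * DualE F x 4 :
      Matrix (XG G) (XG G) F) y z = 1 := by
    rw [target_entry x g h i y z hy4 hz4]
    rw [Finset.sum_eq_single_of_mem w0 (Finset.mem_univ w0)]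
    · rw [if_pos]
      refine ⟨?_, ?_, ?_⟩
      · exact (rel_mid hg0 hg4).mpr ⟨fun e => H1 (cIdx h) (by rw [e, W2]),
          W1.symm⟩
      · exact (rel_mid hh0 hh4).mpr ⟨fun e => H1 (cIdx g) (by rw [← W1, ← e]),
          W2.symm⟩
      · exact (rel_mid hi0 hi4).mpr ⟨fun e => H2 (cIdx h) (by rw [← e, W2]), W3⟩
    · intro b _ hb
      rw [if_neg]
      rintro ⟨r1, r2, r3⟩
      exact hb (huniq b r1 r2)
  have hval' : (DualE F x 4 * Adj F g * DualE F x h * Adj F i * DualE F x 4 :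
      Matrix (XG G) (XG G) F) y z' = 0 := by
    rw [target_entry x g h i y z' hy4 hz'4]
    apply Finset.sum_eq_zero
    intro w _
    rw [if_neg]
    rintro ⟨r1, r2, r3⟩
    have hw : w = w0 := huniq w r1 r2
    subst hw
    exact W4 ((rel_mid hi0 hi4).mp r3).2
  have := span_eq x y z z' (reltype x z z' H2 H3) (reltype y z z' H4 H5) _ hmem
  rw [hval, hval'] at this
  exact one_ne_zero this

end Key

def pt {G : Type} [Group G] (x : XG G) (v : Fin 3 → G)
    (hv : (x.1 0 * v 0) * (x.1 1 * v 1) = x.1 2 * v 2) : XG G :=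
  ⟨fun d => x.1 d * v d, hv⟩

section Main

variable {G : Type} [Group G]

lemma hxne (x : XG G) (v : Fin 3 → G) (hv : _) (h : ∀ d, v d ≠ 1) :
    ∀ d, x.1 d ≠ (pt x v hv).1 d := by
  intro d heq
  exact h d (left_eq_mul.mp heq)

lemma hptne (x : XG G) (v w : Fin 3 → G) (hv : _) (hw : _) (hvw : ∀ d, v d ≠ w d) :
    ∀ d, (pt x v hv).1 d ≠ (pt x w hw).1 d := by
  intro d heq
  exact hvw d (mul_left_cancel heq)

end Main

theorem stmt3 (F : Type) [Field F] (G : Type) [Group G] [Fintype G] [DecidableEq G]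
    (helem : ∀ a : G, a ^ 2 = 1) (hcard : 4 ≤ Fintype.card G)
    (x : XG G) (g h i : Fin 5)
    (hghi : ({g, h, i} : Finset (Fin 5)) = {1, 2, 3}) :
    DualE F x 4 * Adj F g * DualE F x h * Adj F i * DualE F x 4 ∉
      Submodule.span F (genSet F G x) := by
  have hsq : ∀ u : G, u * u = 1 := by
    intro u; have := helem u; rwa [pow_two] at this
  have hinv : ∀ u : G, u⁻¹ = u := fun u => inv_eq_of_mul_eq_one_right (hsq u)
  have hcomm : ∀ s t : G, s * t = t * s := by
    intro s t
    calc s * t = (s * t)⁻¹ := (hinv (s * t)).symm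
      _ = t⁻¹ * s⁻¹ := mul_inv_rev s t
      _ = t * s := by rw [hinv, hinv]
  have m1 : ∀ s t : G, t * (s * t) = s := by
    intro s t; rw [hcomm s t, ← mul_assoc, hsq, one_mul]
  have m2 : ∀ s t : G, (s * t) * s = t := by
    intro s t; rw [hcomm s t, mul_assoc, hsq, mul_one]
  have hmix : ∀ p q r s : G, (p * q) * (r * s) = (p * r) * (q * s) := by
    intro p q r s
    rw [mul_assoc, ← mul_assoc q r s, hcomm q r, mul_assoc r q s, ← mul_assoc p r (q * s)]
  have mkh : ∀ v : Fin 3 → G, v 0 * v 1 = v 2 →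
      (x.1 0 * v 0) * (x.1 1 * v 1) = x.1 2 * v 2 := by
    intro v hv; rw [hmix, x.2, hv]
  -- obtain two distinct nontrivial elements
  obtain ⟨a, ha1⟩ := Fintype.exists_ne_of_one_lt_card (by omega) (1 : G)
  have hbex : ∃ b : G, b ≠ 1 ∧ b ≠ a := by
    by_contra hcon
    push_neg at hcon
    have hsub : (Finset.univ : Finset G) ⊆ {1, a} := by
      intro u _
      rcases eq_or_ne u 1 with hu | hu
      · simp [hu]
      · simp [hcon u hu]
    have h2 : ({1, a} : Finset G).card ≤ 2 := by
      refine le_trans (Finset.card_insert_le _ _) ?_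
      simp
    have := (Finset.card_le_card hsub).trans h2
    rw [Finset.card_univ] at this
    omega
  obtain ⟨b, hb1, hba⟩ := hbex
  have hab : a ≠ b := hba.symm
  have hc1 : a * b ≠ 1 := by
    intro hh
    exact hab (mul_eq_one_iff_eq_inv.mp hh ▸ (hinv b).symm ▸ rfl)
  have hac : a ≠ a * b := fun hh => hb1 (left_eq_mul.mp hh)
  have hca : a * b ≠ a := hac.symm
  have hbc : b ≠ a * b := fun hh => ha1 (right_eq_mul.mp hh)
  have hcb : a * b ≠ b := hbc.symm
  -- the points
  have pfA := mkh ![a, b, a*b] (by simp)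
  have pfB1 := mkh ![b, a*b, a] (by simp [m1 a b])
  have pfB2 := mkh ![a*b, a, b] (by simp [m2 a b])
  have Hxy := hxne x _ pfA (by intro d; fin_cases d <;> simp [ha1, hb1, hc1])
  have HxB1 := hxne x _ pfB1 (by intro d; fin_cases d <;> simp [ha1, hb1, hc1])
  have HxB2 := hxne x _ pfB2 (by intro d; fin_cases d <;> simp [ha1, hb1, hc1])
  have HyB1 := hptne x _ _ pfA pfB1 (by intro d; fin_cases d <;> simp [hab, hbc, hca])
  have HyB2 := hptne x _ _ pfA pfB2 (by intro d; fin_cases d <;> simp [hac, hba, hcb])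
  have hg : g ∈ ({1, 2, 3} : Finset (Fin 5)) := hghi ▸ Finset.mem_insert_self g {h, i}
  have hh : h ∈ ({1, 2, 3} : Finset (Fin 5)) :=
    hghi ▸ Finset.mem_insert_of_mem (Finset.mem_insert_self h {i})
  have hi : i ∈ ({1, 2, 3} : Finset (Fin 5)) :=
    hghi ▸ Finset.mem_insert_of_mem (Finset.mem_insert_of_mem (Finset.mem_singleton_self i))
  fin_cases hg <;> fin_cases hh <;> fin_cases hi <;>
    first
      | exact absurd hghi (by decide)
      | skip
  · exact key x (pt x ![a,b,a*b] pfA) (pt x ![b,a*b,a] pfB1) (pt x ![a*b,a,b] pfB2)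
      (pt x ![a,1,a] (mkh _ (by simp)))
      hsq 1 2 3 (by decide) (by decide) (by decide) (by decide) (by decide) (by decide)
      (by decide) Hxy HxB1 HxB2 HyB1 HyB2
      (by simp [pt, cIdx]) (by simp [pt, cIdx]) (by simp [pt, cIdx])
      (by simp [pt, cIdx, hab])
  · exact key x (pt x ![a,b,a*b] pfA) (pt x ![a*b,a,b] pfB2) (pt x ![b,a*b,a] pfB1)
      (pt x ![a,a,1] (mkh _ (by simp [hsq a])))
      hsq 1 3 2 (by decide) (by decide) (by decide) (by decide) (by decide) (by decide)
      (by decide) Hxy HxB2 HxB1 HyB2 HyB1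
      (by simp [pt, cIdx]) (by simp [pt, cIdx]) (by simp [pt, cIdx])
      (by simp [pt, cIdx, hac])
  · exact key x (pt x ![a,b,a*b] pfA) (pt x ![a*b,a,b] pfB2) (pt x ![b,a*b,a] pfB1)
      (pt x ![1,b,b] (mkh _ (by simp)))
      hsq 2 1 3 (by decide) (by decide) (by decide) (by decide) (by decide) (by decide)
      (by decide) Hxy HxB2 HxB1 HyB2 HyB1
      (by simp [pt, cIdx]) (by simp [pt, cIdx]) (by simp [pt, cIdx])
      (by simp [pt, cIdx, hba])
  · exact key x (pt x ![a,b,a*b] pfA) (pt x ![b,a*b,a] pfB1) (pt x ![a*b,a,b] pfB2)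
      (pt x ![b,b,1] (mkh _ (by simp [hsq b])))
      hsq 2 3 1 (by decide) (by decide) (by decide) (by decide) (by decide) (by decide)
      (by decide) Hxy HxB1 HxB2 HyB1 HyB2
      (by simp [pt, cIdx]) (by simp [pt, cIdx]) (by simp [pt, cIdx])
      (by simp [pt, cIdx, hbc])
  · exact key x (pt x ![a,b,a*b] pfA) (pt x ![b,a*b,a] pfB1) (pt x ![a*b,a,b] pfB2)
      (pt x ![1,a*b,a*b] (mkh _ (by simp)))
      hsq 3 1 2 (by decide) (by decide) (by decide) (by decide) (by decide) (by decide)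
      (by decide) Hxy HxB1 HxB2 HyB1 HyB2
      (by simp [pt, cIdx]) (by simp [pt, cIdx]) (by simp [pt, cIdx])
      (by simp [pt, cIdx, hca])
  · exact key x (pt x ![a,b,a*b] pfA) (pt x ![a*b,a,b] pfB2) (pt x ![b,a*b,a] pfB1)
      (pt x ![a*b,1,a*b] (mkh _ (by simp)))
      hsq 3 2 1 (by decide) (by decide) (by decide) (by decide) (by decide) (by decide)
      (by decide) Hxy HxB2 HxB1 HyB2 HyB1
      (by simp [pt, cIdx]) (by simp [pt, cIdx]) (by simp [pt, cIdx])
      (by simp [pt, cIdx, hcb])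
end

section
/- Assume G is an elementary abelian 2-group and {g,h,i} = {1,2,3}. Write the fixed base point as x = (x₁,x₂,x₃), and let y = (y₁,y₂,y₃), z = (z₁,z₂,z₃) ∈ X_G satisfy (x,y) ∈ R_4 and (x,z) ∈ R_4. Then the (y,z)-entry of E_4*A_gE_h*A_iE_4* and the (y,z)-entry of E_4*A_iE_h*A_gE_4* are both nonzero if and only if z_g = x_h y_i, z_h = y_h, and z_i = x_h y_g. -/
open Matrix

section Aux
variable {G : Type} [Group G]

lemma mysq (helem : ∀ a : G, a ^ 2 = 1) (a : G) : a * a = 1 := by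
  have := helem a; rwa [sq] at this

lemma myinv (helem : ∀ a : G, a ^ 2 = 1) (a : G) : a⁻¹ = a :=
  inv_eq_of_mul_eq_one_right (mysq helem a)

lemma mycomm (helem : ∀ a : G, a ^ 2 = 1) (a b : G) : a * b = b * a := by
  calc a * b = (a * b)⁻¹ := (myinv helem _).symm
    _ = b⁻¹ * a⁻¹ := mul_inv_rev a b
    _ = b * a := by rw [myinv helem, myinv helem]

lemma sqL (helem : ∀ a : G, a ^ 2 = 1) (a c : G) : a * (a * c) = c := by
  rw [← mul_assoc, mysq helem, one_mul]

lemma commL (helem : ∀ a : G, a ^ 2 = 1) (a b c : G) : a * (b * c) = b * (a * c) := by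
  rw [← mul_assoc, mycomm helem a b, mul_assoc]

lemma XG.ext2 {w w' : XG G} {a b : Fin 3} (hab : a ≠ b)
    (h1 : w.1 a = w'.1 a) (h2 : w.1 b = w'.1 b) : w = w' := by
  have key : ∀ (u v : XG G), u.1 0 = v.1 0 → u.1 1 = v.1 1 → u = v := by
    intro u v h0 h1'
    have h2' : u.1 2 = v.1 2 := by rw [← u.2, ← v.2, h0, h1']
    apply Subtype.ext; funext d
    fin_cases d
    · exact h0
    · exact h1'
    · exact h2'
  have c1 : ∀ u : XG G, u.1 1 = (u.1 0)⁻¹ * u.1 2 := by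
    intro u; rw [← u.2]; group
  have c0 : ∀ u : XG G, u.1 0 = u.1 2 * (u.1 1)⁻¹ := by
    intro u; rw [← u.2]; group
  fin_cases a <;> fin_cases b
  · exact absurd rfl hab
  · exact key _ _ h1 h2
  · exact key _ _ h1 (by rw [c1 w, c1 w']; exact congrArg₂ (fun s t => s⁻¹ * t) h1 h2)
  · exact key _ _ h2 h1
  · exact absurd rfl hab
  · exact key _ _ (by rw [c0 w, c0 w']; exact congrArg₂ (fun s t => s * t⁻¹) h2 h1) h1
  · exact key _ _ h2 (by rw [c1 w, c1 w']; exact congrArg₂ (fun s t => s⁻¹ * t) h2 h1)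
  · exact key _ _ (by rw [c0 w, c0 w']; exact congrArg₂ (fun s t => s * t⁻¹) h1 h2) h2
  · exact absurd rfl hab

lemma prod3 (helem : ∀ a : G, a ^ 2 = 1) (w : XG G) {a b c : Fin 3}
    (hab : a ≠ b) (hac : a ≠ c) (hbc : b ≠ c) : w.1 c = w.1 a * w.1 b := by
  have e2 : w.1 2 = w.1 0 * w.1 1 := w.2.symm
  have e2' : w.1 2 = w.1 1 * w.1 0 := by rw [e2, mycomm helem]
  have e1 : w.1 1 = w.1 0 * w.1 2 := by rw [e2]; exact (sqL helem _ _).symm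
  have e1' : w.1 1 = w.1 2 * w.1 0 := by rw [e1, mycomm helem]
  have e0 : w.1 0 = w.1 1 * w.1 2 := by
    rw [e2, commL helem, mysq helem, mul_one]
  have e0' : w.1 0 = w.1 2 * w.1 1 := by rw [e0, mycomm helem]
  fin_cases a <;> fin_cases b <;> fin_cases c <;>
    first
      | exact absurd rfl hab | exact absurd rfl hac | exact absurd rfl hbc
      | exact e2 | exact e2' | exact e1 | exact e1' | exact e0 | exact e0'

lemma exists_ab (helem : ∀ a : G, a ^ 2 = 1) {a b : Fin 3} (hab : a ≠ b) (u v : G) :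
    ∃ w : XG G, w.1 a = u ∧ w.1 b = v := by
  fin_cases a <;> fin_cases b
  · exact absurd rfl hab
  · exact ⟨⟨![u, v, u * v], by simp⟩, rfl, rfl⟩
  · exact ⟨⟨![u, u * v, v], by simp [sqL helem]⟩, rfl, rfl⟩
  · exact ⟨⟨![v, u, v * u], by simp⟩, rfl, rfl⟩
  · exact absurd rfl hab
  · exact ⟨⟨![v * u, u, v], by simp [mul_assoc, mysq helem]⟩, rfl, rfl⟩
  · exact ⟨⟨![v, v * u, u], by simp [sqL helem]⟩, rfl, rfl⟩
  · exact ⟨⟨![u * v, v, u], by simp [mul_assoc, mysq helem]⟩, rfl, rfl⟩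
  · exact absurd rfl hab

end Aux

section Core
variable {G : Type} [Group G] [Fintype G] [DecidableEq G]

omit [Fintype G] [DecidableEq G] in
lemma rel_mid_s4 {j : Fin 5} (hj0 : j ≠ 0) (hj4 : j ≠ 4) (y z : XG G) :
    rel j y z ↔ y ≠ z ∧ y.1 (cIdx j) = z.1 (cIdx j) := by
  simp [rel, hj0, hj4]

omit [Fintype G] [DecidableEq G] in
lemma rel_four (y z : XG G) : rel 4 y z ↔ ∀ d : Fin 3, y.1 d ≠ z.1 d := by
  simp [rel]

lemma DualE_mul (F : Type) [Field F] (x : XG G) (j : Fin 5)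
    (M : Matrix (XG G) (XG G) F) (u w : XG G) :
    (DualE F x j * M) u w = if rel j x u then M u w else 0 := by
  rw [Matrix.mul_apply, Finset.sum_eq_single u]
  · by_cases h : rel j x u <;> simp [DualE, h]
  · intro b _ hbu; simp [DualE, Ne.symm hbu]
  · intro habs; exact absurd (Finset.mem_univ u) habs

lemma mul_DualE (F : Type) [Field F] (x : XG G) (j : Fin 5)
    (M : Matrix (XG G) (XG G) F) (u w : XG G) :
    (M * DualE F x j) u w = if rel j x w then M u w else 0 := by
  rw [Matrix.mul_apply, Finset.sum_eq_single w]
  · by_cases h : rel j x w <;> simp [DualE, h]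
  · intro b _ hbw; simp [DualE, hbw]
  · intro habs; exact absurd (Finset.mem_univ w) habs

lemma prodite (F : Type) [Field F] (P Q R : Prop) [Decidable P] [Decidable Q] [Decidable R] :
    (if P then (if Q then (1:F) else 0) else 0) * (if R then 1 else 0)
      = if P ∧ Q ∧ R then 1 else 0 := by
  split_ifs <;> simp_all

lemma entry_eq (F : Type) [Field F] (helem : ∀ a : G, a ^ 2 = 1)
    (x y z : XG G) (hy : rel 4 x y) (hz : rel 4 x z)
    {g h i : Fin 5} (hg0 : g ≠ 0) (hg4 : g ≠ 4) (hh0 : h ≠ 0) (hh4 : h ≠ 4)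
    (hi0 : i ≠ 0) (hi4 : i ≠ 4)
    (hab : cIdx g ≠ cIdx h) (hac : cIdx g ≠ cIdx i) (hbc : cIdx h ≠ cIdx i) :
    (DualE F x 4 * Adj F g * DualE F x h * Adj F i * DualE F x 4 :
        Matrix (XG G) (XG G) F) y z
      = if z.1 (cIdx i) = x.1 (cIdx h) * y.1 (cIdx g) then 1 else 0 := by
  have hy4 : ∀ d : Fin 3, x.1 d ≠ y.1 d := (rel_four x y).mp hy
  have hz4 : ∀ d : Fin 3, x.1 d ≠ z.1 d := (rel_four x z).mp hz
  rw [mul_DualE, if_pos hz, Matrix.mul_apply]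
  simp only [mul_DualE, DualE_mul, hy, if_true, Adj, Matrix.of_apply, prodite]
  by_cases hcond : z.1 (cIdx i) = x.1 (cIdx h) * y.1 (cIdx g)
  · rw [if_pos hcond]
    obtain ⟨w₀, hwa, hwb⟩ := exists_ab helem hab (y.1 (cIdx g)) (x.1 (cIdx h))
    have hwc : w₀.1 (cIdx i) = z.1 (cIdx i) := by
      rw [prod3 helem w₀ hab hac hbc, hwa, hwb, hcond, mycomm helem]
    have huniq : ∀ w : XG G, (rel h x w ∧ rel g y w ∧ rel i w z) ↔ w = w₀ := by
      intro w
      rw [rel_mid_s4 hh0 hh4, rel_mid_s4 hg0 hg4, rel_mid_s4 hi0 hi4]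
      constructor
      · rintro ⟨⟨_, hxb⟩, ⟨_, hya⟩, ⟨_, hwc'⟩⟩
        exact XG.ext2 hab (hya.symm.trans hwa.symm) (hxb.symm.trans hwb.symm)
      · rintro rfl
        refine ⟨⟨?_, hwb.symm⟩, ⟨?_, hwa.symm⟩, ⟨?_, hwc⟩⟩
        · intro heq; exact hy4 (cIdx g) (by rw [heq, hwa])
        · intro heq
          exact hy4 (cIdx h) (show y.1 (cIdx h) = x.1 (cIdx h) by rw [heq, hwb]).symm
        · intro heq; exact hz4 (cIdx h) (by rw [← heq, hwb])
    simp only [huniq]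
    simp
  · rw [if_neg hcond]
    apply Finset.sum_eq_zero
    intro w _
    rw [if_neg]
    rw [rel_mid_s4 hh0 hh4, rel_mid_s4 hg0 hg4, rel_mid_s4 hi0 hi4]
    rintro ⟨⟨_, hxb⟩, ⟨_, hya⟩, ⟨_, hwc⟩⟩
    apply hcond
    rw [← hwc, prod3 helem w hab hac hbc, ← hya, ← hxb, mycomm helem]

lemma main_aux (F : Type) [Field F] (helem : ∀ a : G, a ^ 2 = 1)
    (x y z : XG G) (hy : rel 4 x y) (hz : rel 4 x z)
    {g h i : Fin 5} (hg0 : g ≠ 0) (hg4 : g ≠ 4) (hh0 : h ≠ 0) (hh4 : h ≠ 4)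
    (hi0 : i ≠ 0) (hi4 : i ≠ 4)
    (hab : cIdx g ≠ cIdx h) (hac : cIdx g ≠ cIdx i) (hbc : cIdx h ≠ cIdx i) :
    ((DualE F x 4 * Adj F g * DualE F x h * Adj F i * DualE F x 4 :
        Matrix (XG G) (XG G) F) y z ≠ 0 ∧
     (DualE F x 4 * Adj F i * DualE F x h * Adj F g * DualE F x 4 :
        Matrix (XG G) (XG G) F) y z ≠ 0) ↔
      (z.1 (cIdx g) = x.1 (cIdx h) * y.1 (cIdx i) ∧
       z.1 (cIdx h) = y.1 (cIdx h) ∧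
       z.1 (cIdx i) = x.1 (cIdx h) * y.1 (cIdx g)) := by
  rw [entry_eq F helem x y z hy hz hg0 hg4 hh0 hh4 hi0 hi4 hab hac hbc,
      entry_eq F helem x y z hy hz hi0 hi4 hh0 hh4 hg0 hg4 hbc.symm hac.symm hab.symm]
  simp only [ne_eq, ite_eq_right_iff, one_ne_zero, imp_false, not_not]
  constructor
  · rintro ⟨h1, h2⟩
    refine ⟨h2, ?_, h1⟩
    have hzb : z.1 (cIdx h) = z.1 (cIdx i) * z.1 (cIdx g) :=
      prod3 helem z hac.symm hbc.symm hab
    have hyb : y.1 (cIdx h) = y.1 (cIdx i) * y.1 (cIdx g) :=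
      prod3 helem y hac.symm hbc.symm hab
    rw [hzb, h1, h2, hyb]
    simp [mul_assoc, mycomm helem, commL helem, sqL helem, mysq helem]
  · rintro ⟨h2, _, h1⟩
    exact ⟨h1, h2⟩

end Core

theorem stmt4 (F : Type) [Field F] (G : Type) [Group G] [Fintype G] [DecidableEq G]
    (helem : ∀ a : G, a ^ 2 = 1) (hcard : 3 ≤ Fintype.card G)
    (x : XG G) (g h i : Fin 5)
    (hghi : ({g, h, i} : Finset (Fin 5)) = {1, 2, 3})
    (y z : XG G) (hy : rel 4 x y) (hz : rel 4 x z) :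
    ((DualE F x 4 * Adj F g * DualE F x h * Adj F i * DualE F x 4 :
        Matrix (XG G) (XG G) F) y z ≠ 0 ∧
     (DualE F x 4 * Adj F i * DualE F x h * Adj F g * DualE F x 4 :
        Matrix (XG G) (XG G) F) y z ≠ 0) ↔
      (z.1 (cIdx g) = x.1 (cIdx h) * y.1 (cIdx i) ∧
       z.1 (cIdx h) = y.1 (cIdx h) ∧
       z.1 (cIdx i) = x.1 (cIdx h) * y.1 (cIdx g)) := by
  have hmemg : g ∈ ({1, 2, 3} : Finset (Fin 5)) := by rw [← hghi]; simp
  have hmemh : h ∈ ({1, 2, 3} : Finset (Fin 5)) := by rw [← hghi]; simp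
  have hmemi : i ∈ ({1, 2, 3} : Finset (Fin 5)) := by rw [← hghi]; simp
  simp only [Finset.mem_insert, Finset.mem_singleton] at hmemg hmemh hmemi
  rcases hmemg with rfl | rfl | rfl <;> rcases hmemh with rfl | rfl | rfl <;>
    rcases hmemi with rfl | rfl | rfl <;>
    first
      | exact absurd hghi (by decide)
      | exact main_aux F helem x y z hy hz (by decide) (by decide) (by decide)
          (by decide) (by decide) (by decide) (by decide) (by decide) (by decide)
end

section
/- Assume G is an elementary abelian 2-group and {g,h,i} = {1,2,3}. Write the fixed base point as x = (x₁,x₂,x₃), and let y = (y₁,y₂,y₃), z = (z₁,z₂,z₃) ∈ X_G satisfy (x,y) ∈ R_4 and (x,z) ∈ R_4. Then: (1) the (y,z)-entries of E_4*A_gE_h*A_iE_4* and of E_4*A_iE_g*A_hE_4* are both nonzero if and only if z_g = x_i y_h, z_h = x_g y_i, and z_i = x_h y_g; (2) the (y,z)-entries of E_4*A_gE_h*A_iE_4* and of E_4*A_hE_i*A_gE_4* are both nonzero if and only if z_g = x_i y_h, z_h = x_g y_i, and z_i = x_h y_g. -/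
open Matrix

-- auxiliary lemmas
lemma inv_self' {G : Type} [Group G] (sq : ∀ a : G, a * a = 1) (a : G) : a⁻¹ = a :=
  inv_eq_of_mul_eq_one_right (sq a)

lemma comm3a {G : Type} [Group G] (hcomm : ∀ a b : G, a * b = b * a) (u v w : G) :
    u * v * w = v * u * w := by rw [hcomm u v]

lemma comm3b {G : Type} [Group G] (hcomm : ∀ a b : G, a * b = b * a) (u v w : G) :
    u * v * w = u * w * v := by rw [mul_assoc, hcomm v w, ← mul_assoc]

lemma tri' {G : Type} [Group G] (sq : ∀ a : G, a * a = 1) (hcomm : ∀ a b : G, a * b = b * a)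
    (a b c : G) : a * b * c = 1 ↔ c = b * a := by
  rw [mul_eq_one_iff_eq_inv, inv_self' sq, hcomm a b]
  exact eq_comm

lemma permProd {G : Type} [Group G] (sq : ∀ a : G, a * a = 1)
    (hcomm : ∀ a b : G, a * b = b * a) {a b c : Fin 3}
    (hab : a ≠ b) (hbc : b ≠ c) (hac : a ≠ c) (f : Fin 3 → G) :
    (f 0 * f 1 = f 2) ↔ f a * f b * f c = 1 := by
  have h6 : f a * f b * f c = f 0 * f 1 * f 2 := by
    rcases (by decide : ∀ a b c : Fin 3, a ≠ b → b ≠ c → a ≠ c →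
        ((a=0∧b=1∧c=2)∨(a=0∧b=2∧c=1)∨(a=1∧b=0∧c=2)∨(a=1∧b=2∧c=0)∨(a=2∧b=0∧c=1)∨(a=2∧b=1∧c=0)))
        a b c hab hbc hac with
      ⟨rfl,rfl,rfl⟩|⟨rfl,rfl,rfl⟩|⟨rfl,rfl,rfl⟩|⟨rfl,rfl,rfl⟩|⟨rfl,rfl,rfl⟩|⟨rfl,rfl,rfl⟩
    · rfl
    · rw [comm3b hcomm]
    · rw [comm3a hcomm]
    · rw [comm3b hcomm, comm3a hcomm]
    · rw [comm3a hcomm, comm3b hcomm]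
    · rw [comm3b hcomm, comm3a hcomm, comm3b hcomm]
  rw [h6, mul_eq_one_iff_eq_inv, inv_self' sq]

lemma deriv' {G : Type} [Group G] (sq : ∀ a : G, a * a = 1)
    (hcomm : ∀ a b : G, a * b = b * a) (a b c d e f u v w : G)
    (hX : a * b * c = 1) (hY : d * e * f = 1) (hZ : u * v * w = 1)
    (h3 : w = b * d) (h2 : v = a * f) : u = c * e := by
  have huvw : u = v * w := by
    have hh : u * (v * w) = 1 := by rw [← mul_assoc]; exact hZ
    have := mul_eq_one_iff_eq_inv.mp hh
    rwa [inv_self' sq] at this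
  have hab : a * b = c := by
    have := mul_eq_one_iff_eq_inv.mp hX
    rwa [inv_self' sq] at this
  have hdf : d * f = e := by
    have hY' : d * f * e = 1 := by rw [comm3b hcomm]; exact hY
    have := mul_eq_one_iff_eq_inv.mp hY'
    rwa [inv_self' sq] at this
  calc u = v * w := huvw
    _ = (a * f) * (b * d) := by rw [h2, h3]
    _ = a * (f * (b * d)) := by rw [mul_assoc]
    _ = a * ((f * b) * d) := by rw [mul_assoc]
    _ = a * ((b * f) * d) := by rw [hcomm f b]
    _ = a * (b * (f * d)) := by rw [mul_assoc]
    _ = (a * b) * (f * d) := by rw [← mul_assoc]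
    _ = c * (f * d) := by rw [hab]
    _ = c * (d * f) := by rw [hcomm f d]
    _ = c * e := by rw [hdf]

lemma relI {G : Type} [Group G] {p : Fin 5} (hp0 : p ≠ 0) (hp4 : p ≠ 4) (a b : XG G) :
    rel p a b ↔ a ≠ b ∧ a.1 (cIdx p) = b.1 (cIdx p) := by simp [rel, hp0, hp4]

lemma rel4iff {G : Type} [Group G] (a b : XG G) :
    rel 4 a b ↔ ∀ d, a.1 d ≠ b.1 d := by simp [rel]

def cand {G : Type} [Group G] (x y z : XG G) (p q r : Fin 5) : Fin 3 → G :=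
  fun d => if d = cIdx p then y.1 (cIdx p) else if d = cIdx q then x.1 (cIdx q) else z.1 (cIdx r)

lemma entry_iff (F : Type) [Field F] {G : Type} [Group G] [Fintype G] [DecidableEq G]
    (helem : ∀ a : G, a ^ 2 = 1)
    (x y z : XG G) (hy : rel 4 x y) (hz : rel 4 x z)
    {p q r : Fin 5} (hp0 : p ≠ 0) (hp4 : p ≠ 4) (hq0 : q ≠ 0) (hq4 : q ≠ 4)
    (hr0 : r ≠ 0) (hr4 : r ≠ 4)
    (hpq : cIdx p ≠ cIdx q) (hqr : cIdx q ≠ cIdx r) (hpr : cIdx p ≠ cIdx r) :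
    (DualE F x 4 * Adj F p * DualE F x q * Adj F r * DualE F x 4 :
        Matrix (XG G) (XG G) F) y z ≠ 0 ↔
      z.1 (cIdx r) = x.1 (cIdx q) * y.1 (cIdx p) := by
  classical
  have sq : ∀ a : G, a * a = 1 := fun a => by have h := helem a; rwa [pow_two] at h
  have hcomm : ∀ a b : G, a * b = b * a := fun a b => by
    calc a * b = (a * b)⁻¹ := (inv_self' sq _).symm
      _ = b⁻¹ * a⁻¹ := mul_inv_rev _ _
      _ = b * a := by rw [inv_self' sq, inv_self' sq]
  have hy' : ∀ d, x.1 d ≠ y.1 d := (rel4iff x y).mp hy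
  have hz' : ∀ d, x.1 d ≠ z.1 d := (rel4iff x z).mp hz
  set v : Fin 3 → G := cand x y z p q r with hvdef
  have vp : v (cIdx p) = y.1 (cIdx p) := by simp [hvdef, cand]
  have vq : v (cIdx q) = x.1 (cIdx q) := by
    simp [hvdef, cand, Ne.symm hpq]
  have vr : v (cIdx r) = z.1 (cIdx r) := by
    simp [hvdef, cand, Ne.symm hpr, Ne.symm hqr]
  have e1 : ∀ (N : Matrix (XG G) (XG G) F) (a : Fin 5) (u w : XG G),
      (N * DualE F x a) u w = if rel a x w then N u w else 0 := by
    intro N a u w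
    rw [Matrix.mul_apply, Finset.sum_eq_single w]
    · simp [DualE]
    · intro b _ hb; simp [DualE, hb]
    · simp
  have e2 : ∀ (N : Matrix (XG G) (XG G) F) (a : Fin 5) (u w : XG G),
      (DualE F x a * N) u w = if rel a x u then N u w else 0 := by
    intro N a u w
    rw [Matrix.mul_apply, Finset.sum_eq_single u]
    · simp [DualE]
    · intro b _ hb; simp [DualE, Ne.symm hb]
    · simp
  have wiff : ∀ w : XG G, (rel p y w ∧ rel q x w ∧ rel r w z) ↔ w.1 = v := by
    intro w
    constructor
    · rintro ⟨h1, h2, h3⟩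
      rw [relI hp0 hp4] at h1
      rw [relI hq0 hq4] at h2
      rw [relI hr0 hr4] at h3
      funext d
      rcases (by decide : ∀ a b c d : Fin 3, a ≠ b → b ≠ c → a ≠ c →
          (d = a ∨ d = b ∨ d = c)) (cIdx p) (cIdx q) (cIdx r) d hpq hqr hpr with rfl | rfl | rfl
      · rw [vp]; exact h1.2.symm
      · rw [vq]; exact h2.2.symm
      · rw [vr]; exact h3.2
    · intro hw
      have c1 : w.1 (cIdx p) = y.1 (cIdx p) := by rw [hw, vp]
      have c2 : w.1 (cIdx q) = x.1 (cIdx q) := by rw [hw, vq]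
      have c3 : w.1 (cIdx r) = z.1 (cIdx r) := by rw [hw, vr]
      refine ⟨(relI hp0 hp4 _ _).mpr ⟨?_, c1.symm⟩, (relI hq0 hq4 _ _).mpr ⟨?_, c2.symm⟩,
        (relI hr0 hr4 _ _).mpr ⟨?_, c3⟩⟩
      · intro e; apply hy' (cIdx q); rw [← c2, ← e]
      · intro e; apply hy' (cIdx p); rw [← c1, ← e]
      · intro e; apply hz' (cIdx q); rw [← c2, e]
  have key : (DualE F x 4 * Adj F p * DualE F x q * Adj F r * DualE F x 4 :
      Matrix (XG G) (XG G) F) y z = ∑ w : XG G, (if w.1 = v then (1 : F) else 0) := by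
    rw [e1, if_pos hz, Matrix.mul_apply]
    refine Finset.sum_congr rfl (fun w _ => ?_)
    rw [e1, e2, if_pos hy]
    simp only [Adj, Matrix.of_apply]
    by_cases hw : w.1 = v
    · have h123 := (wiff w).mpr hw
      rw [if_pos h123.2.1, if_pos h123.1, if_pos h123.2.2, if_pos hw, one_mul]
    · rw [if_neg hw]
      by_cases h2 : rel q x w
      · rw [if_pos h2]
        by_cases h1 : rel p y w
        · rw [if_pos h1]
          by_cases h3 : rel r w z
          · exact (hw ((wiff w).mp ⟨h1, h2, h3⟩)).elim
          · rw [if_neg h3, mul_zero]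
        · rw [if_neg h1, zero_mul]
      · rw [if_neg h2, zero_mul]
  rw [key]
  by_cases hv : v 0 * v 1 = v 2
  · have hsum : (∑ w : XG G, (if w.1 = v then (1 : F) else 0)) = 1 := by
      rw [Finset.sum_eq_single (⟨v, hv⟩ : XG G)]
      · simp
      · intro b _ hb
        rw [if_neg]
        intro hb1
        exact hb (Subtype.ext hb1)
      · intro hmem; exact absurd (Finset.mem_univ _) hmem
    rw [hsum]
    simp only [ne_eq, one_ne_zero, not_false_eq_true, true_iff]
    have h1 : v (cIdx p) * v (cIdx q) * v (cIdx r) = 1 :=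
      (permProd sq hcomm hpq hqr hpr v).mp hv
    rw [vp, vq, vr] at h1
    exact (tri' sq hcomm _ _ _).mp h1
  · have hsum : (∑ w : XG G, (if w.1 = v then (1 : F) else 0)) = 0 := by
      refine Finset.sum_eq_zero fun w _ => ?_
      rw [if_neg]
      intro hw
      exact hv (by rw [← hw]; exact w.2)
    rw [hsum]
    constructor
    · intro hc; exact absurd rfl hc
    · intro he
      refine absurd ?_ hv
      refine (permProd sq hcomm hpq hqr hpr v).mpr ?_
      rw [vp, vq, vr]
      exact (tri' sq hcomm _ _ _).mpr he
theorem stmt5 (F : Type) [Field F] (G : Type) [Group G] [Fintype G] [DecidableEq G]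
    (helem : ∀ a : G, a ^ 2 = 1) (hcard : 3 ≤ Fintype.card G)
    (x : XG G) (g h i : Fin 5)
    (hghi : ({g, h, i} : Finset (Fin 5)) = {1, 2, 3})
    (y z : XG G) (hy : rel 4 x y) (hz : rel 4 x z) :
    (((DualE F x 4 * Adj F g * DualE F x h * Adj F i * DualE F x 4 :
          Matrix (XG G) (XG G) F) y z ≠ 0 ∧
      (DualE F x 4 * Adj F i * DualE F x g * Adj F h * DualE F x 4 :
          Matrix (XG G) (XG G) F) y z ≠ 0) ↔
        (z.1 (cIdx g) = x.1 (cIdx i) * y.1 (cIdx h) ∧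
         z.1 (cIdx h) = x.1 (cIdx g) * y.1 (cIdx i) ∧
         z.1 (cIdx i) = x.1 (cIdx h) * y.1 (cIdx g))) ∧
    (((DualE F x 4 * Adj F g * DualE F x h * Adj F i * DualE F x 4 :
          Matrix (XG G) (XG G) F) y z ≠ 0 ∧
      (DualE F x 4 * Adj F h * DualE F x i * Adj F g * DualE F x 4 :
          Matrix (XG G) (XG G) F) y z ≠ 0) ↔
        (z.1 (cIdx g) = x.1 (cIdx i) * y.1 (cIdx h) ∧
         z.1 (cIdx h) = x.1 (cIdx g) * y.1 (cIdx i) ∧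
         z.1 (cIdx i) = x.1 (cIdx h) * y.1 (cIdx g))) := by
  classical
  have sq : ∀ a : G, a * a = 1 := fun a => by have hh := helem a; rwa [pow_two] at hh
  have hcomm : ∀ a b : G, a * b = b * a := fun a b => by
    calc a * b = (a * b)⁻¹ := (inv_self' sq _).symm
      _ = b⁻¹ * a⁻¹ := mul_inv_rev _ _
      _ = b * a := by rw [inv_self' sq, inv_self' sq]
  obtain ⟨hg, hh, hi, hgh, hgi, hhi⟩ :=
    (by decide : ∀ g h i : Fin 5, ({g, h, i} : Finset (Fin 5)) = {1, 2, 3} →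
      ((g = 1 ∨ g = 2 ∨ g = 3) ∧ (h = 1 ∨ h = 2 ∨ h = 3) ∧ (i = 1 ∨ i = 2 ∨ i = 3) ∧
        g ≠ h ∧ g ≠ i ∧ h ≠ i)) g h i hghi
  have ne04 : ∀ a : Fin 5, (a = 1 ∨ a = 2 ∨ a = 3) → a ≠ 0 ∧ a ≠ 4 := by decide
  have cne : ∀ a b : Fin 5, (a = 1 ∨ a = 2 ∨ a = 3) → (b = 1 ∨ b = 2 ∨ b = 3) →
      a ≠ b → cIdx a ≠ cIdx b := by decide
  have cgh := cne g h hg hh hgh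
  have cgi := cne g i hg hi hgi
  have chi := cne h i hh hi hhi
  have E1 := entry_iff F helem x y z hy hz (ne04 g hg).1 (ne04 g hg).2 (ne04 h hh).1
    (ne04 h hh).2 (ne04 i hi).1 (ne04 i hi).2 cgh chi cgi
  have E2 := entry_iff F helem x y z hy hz (ne04 i hi).1 (ne04 i hi).2 (ne04 g hg).1
    (ne04 g hg).2 (ne04 h hh).1 (ne04 h hh).2 cgi.symm cgh chi.symm
  have E3 := entry_iff F helem x y z hy hz (ne04 h hh).1 (ne04 h hh).2 (ne04 i hi).1
    (ne04 i hi).2 (ne04 g hg).1 (ne04 g hg).2 chi cgi.symm cgh.symm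
  have prodX : x.1 (cIdx g) * x.1 (cIdx h) * x.1 (cIdx i) = 1 :=
    (permProd sq hcomm cgh chi cgi x.1).mp x.2
  have prodY : y.1 (cIdx g) * y.1 (cIdx h) * y.1 (cIdx i) = 1 :=
    (permProd sq hcomm cgh chi cgi y.1).mp y.2
  have prodZ : z.1 (cIdx g) * z.1 (cIdx h) * z.1 (cIdx i) = 1 :=
    (permProd sq hcomm cgh chi cgi z.1).mp z.2
  have d1 : z.1 (cIdx i) = x.1 (cIdx h) * y.1 (cIdx g) →
      z.1 (cIdx h) = x.1 (cIdx g) * y.1 (cIdx i) →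
      z.1 (cIdx g) = x.1 (cIdx i) * y.1 (cIdx h) := fun h3 h2 =>
    deriv' sq hcomm _ _ _ _ _ _ _ _ _ prodX prodY prodZ h3 h2
  have d2 : z.1 (cIdx i) = x.1 (cIdx h) * y.1 (cIdx g) →
      z.1 (cIdx g) = x.1 (cIdx i) * y.1 (cIdx h) →
      z.1 (cIdx h) = x.1 (cIdx g) * y.1 (cIdx i) := by
    intro h3 h1
    refine deriv' sq hcomm (x.1 (cIdx i)) (x.1 (cIdx h)) (x.1 (cIdx g)) (y.1 (cIdx g))
      (y.1 (cIdx i)) (y.1 (cIdx h)) (z.1 (cIdx h)) (z.1 (cIdx g)) (z.1 (cIdx i))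
      ?_ ?_ ?_ h3 h1
    · rw [comm3a hcomm, comm3b hcomm, comm3a hcomm]; exact prodX
    · rw [comm3b hcomm]; exact prodY
    · rw [comm3a hcomm]; exact prodZ
  constructor
  · rw [E1, E2]
    exact ⟨fun ⟨h3, h2⟩ => ⟨d1 h3 h2, h2, h3⟩, fun ⟨h1', h2', h3'⟩ => ⟨h3', h2'⟩⟩
  · rw [E1, E3]
    exact ⟨fun ⟨h3, h1⟩ => ⟨h1, d2 h3 h1, h3⟩, fun ⟨h1', h2', h3'⟩ => ⟨h3', h1'⟩⟩
end
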